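/- Let 2 ≤ p < ∞, let n ≥ M ≥ 1 be integers, and let ε > 0 satisfy M < ε^{−p}. For a sign vector s ∈ {−1,+1}^M define f_s on the closed unit ball B of (ℝ^n, ‖·‖_p) by f_s(x) = max_{1≤i≤M} s_i·x_i. Then each f_s is convex and Lipschitz with constant 1 with respect to ‖·‖_p, inf_B f_s ≤ −M^{−1/p}, and every point x ∈ B with f_s(x) < inf_B f_s + ε satisfies s_i·x_i < 0 (equivalently s_i = −sign(x_i)) for every i ∈ {1,…,M}. Consequently, for distinct sign vectors s ≠ t, the sets of ε-minima of f_s and f_t on B are disjoint, and s is uniquely determined by any of its ε-minima. -/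
import Mathlib


/-- The set of ε-minima of `f` on `X`: points `x ∈ X` with `f x < f* + ε`,
where `f* = inf_{x ∈ X} f x`. -/
def epsMinima {E : Type*} (X : Set E) (f : E → ℝ) (ε : ℝ) : Set E :=
  {x ∈ X | f x < sInf (f '' X) + ε}

/-- The `L^p` norm on `ℝ^n` (for real `p`). -/
noncomputable def pNorm {n : ℕ} (p : ℝ) (x : Fin n → ℝ) : ℝ :=
  (∑ i, |x i| ^ p) ^ (1 / p)

/-- The closed unit ball of the `L^p` norm on `ℝ^n`. -/
noncomputable def pBall (n : ℕ) (p : ℝ) : Set (Fin n → ℝ) :=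
  {x | pNorm p x ≤ 1}

lemma pNorm_nonneg {n : ℕ} {p : ℝ} (x : Fin n → ℝ) : 0 ≤ pNorm p x :=
  Real.rpow_nonneg (Finset.sum_nonneg fun _ _ => Real.rpow_nonneg (abs_nonneg _) _) _

lemma abs_coord_le {n : ℕ} {p : ℝ} (hp : 0 < p) (x : Fin n → ℝ) (j : Fin n) :
    |x j| ≤ pNorm p x := by
  have h1 : |x j| = (|x j| ^ p) ^ (1/p) := by
    rw [← Real.rpow_mul (abs_nonneg _), mul_one_div_cancel hp.ne', Real.rpow_one]
  rw [h1]
  exact Real.rpow_le_rpow (Real.rpow_nonneg (abs_nonneg _) _)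
    (Finset.single_le_sum (fun i _ => Real.rpow_nonneg (abs_nonneg _) _) (Finset.mem_univ j))
    (by positivity)

lemma pNorm_smul {n : ℕ} {p : ℝ} (hp : 0 < p) (a : ℝ) (x : Fin n → ℝ) :
    pNorm p (a • x) = |a| * pNorm p x := by
  unfold pNorm
  have h : ∀ i : Fin n, |(a • x) i| ^ p = |a| ^ p * |x i| ^ p := by
    intro i
    simp only [Pi.smul_apply, smul_eq_mul, abs_mul]
    rw [Real.mul_rpow (abs_nonneg _) (abs_nonneg _)]
  rw [Finset.sum_congr rfl fun i _ => h i, ← Finset.mul_sum,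
    Real.mul_rpow (Real.rpow_nonneg (abs_nonneg _) _)
      (Finset.sum_nonneg fun i _ => Real.rpow_nonneg (abs_nonneg _) _),
    ← Real.rpow_mul (abs_nonneg _), mul_one_div_cancel hp.ne', Real.rpow_one]

lemma pNorm_add_le {n : ℕ} {p : ℝ} (hp : 1 ≤ p) (x y : Fin n → ℝ) :
    pNorm p (x + y) ≤ pNorm p x + pNorm p y :=
  Real.Lp_add_le Finset.univ x y hp

lemma pNorm_sub_comm {n : ℕ} {p : ℝ} (x y : Fin n → ℝ) :
    pNorm p (x - y) = pNorm p (y - x) := by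
  unfold pNorm
  congr 1
  exact Finset.sum_congr rfl fun i _ => by rw [Pi.sub_apply, Pi.sub_apply, abs_sub_comm]

/-- for `2 ≤ p < ∞`, `n ≥ M ≥ 1`, `ε > 0` with `M < ε^{-p}`, and
`f_s(x) = max_{i ≤ M} s_i x_i` on the unit `L^p`-ball `B`, each `f_s` is convex
and `1`-Lipschitz for `‖·‖_p`, `inf_B f_s ≤ -M^{-1/p}`, every ε-minimum `x`
satisfies `s_i x_i < 0` for all `i ≤ M`; hence distinct sign vectors have
disjoint sets of ε-minima and `s` is determined by any of its ε-minima. -/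
theorem lp_large_scale_packing (p : ℝ) (hp : 2 ≤ p) (M n : ℕ)
    (hM : 1 ≤ M) (hMn : M ≤ n) (ε : ℝ) (hε : 0 < ε)
    (hMε : (M : ℝ) < ε ^ (-p))
    (f : (Fin M → ℝ) → (Fin n → ℝ) → ℝ)
    (hf : ∀ S x, f S x = ⨆ i : Fin M, S i * x (Fin.castLE hMn i)) :
    (∀ S : Fin M → ℝ, (∀ i, S i = 1 ∨ S i = -1) →
      ConvexOn ℝ (pBall n p) (f S) ∧
      (∀ x ∈ pBall n p, ∀ y ∈ pBall n p, |f S x - f S y| ≤ pNorm p (x - y)) ∧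
      sInf (f S '' pBall n p) ≤ -((M : ℝ) ^ (-(1 / p))) ∧
      (∀ x ∈ pBall n p, f S x < sInf (f S '' pBall n p) + ε →
        ∀ i : Fin M, S i * x (Fin.castLE hMn i) < 0)) ∧
    (∀ S T : Fin M → ℝ, (∀ i, S i = 1 ∨ S i = -1) → (∀ i, T i = 1 ∨ T i = -1) →
      S ≠ T →
      epsMinima (pBall n p) (f S) ε ∩ epsMinima (pBall n p) (f T) ε = ∅) ∧
    (∀ S T : Fin M → ℝ, (∀ i, S i = 1 ∨ S i = -1) → (∀ i, T i = 1 ∨ T i = -1) →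
      ∀ x, x ∈ epsMinima (pBall n p) (f S) ε → x ∈ epsMinima (pBall n p) (f T) ε →
        S = T) := by
  have hp0 : 0 < p := lt_of_lt_of_le two_pos hp
  have hp1 : 1 ≤ p := le_trans one_le_two hp
  have hMpos : (0 : ℝ) < M := by exact_mod_cast hM
  haveI : Nonempty (Fin M) := ⟨⟨0, hM⟩⟩
  set c : ℝ := (M : ℝ) ^ (-(1 / p)) with hc
  have hcpos : 0 < c := Real.rpow_pos_of_pos hMpos _
  -- ε < c
  have hεc : ε < c := by
    have h1 : (M : ℝ) ^ (1/p) < (ε ^ (-p)) ^ (1/p) :=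
      Real.rpow_lt_rpow (le_of_lt hMpos) hMε (by positivity)
    have h2 : (ε ^ (-p)) ^ (1/p) = ε⁻¹ := by
      rw [← Real.rpow_mul hε.le]
      rw [neg_mul, mul_one_div_cancel hp0.ne', Real.rpow_neg_one]
    rw [h2] at h1
    have hc' : c = ((M : ℝ) ^ (1/p))⁻¹ := by
      rw [hc, Real.rpow_neg hMpos.le]
    rw [hc']
    have h3 := inv_strictAnti₀ (Real.rpow_pos_of_pos hMpos (1/p)) h1
    rwa [inv_inv] at h3
  -- basic facts about f S
  have hbdd : ∀ (S : Fin M → ℝ) (x : Fin n → ℝ),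
      BddAbove (Set.range fun i : Fin M => S i * x (Fin.castLE hMn i)) :=
    fun S x => (Set.finite_range _).bddAbove
  have hterm : ∀ (S : Fin M → ℝ) (x : Fin n → ℝ) (i : Fin M),
      S i * x (Fin.castLE hMn i) ≤ f S x := by
    intro S x i
    rw [hf]
    exact le_ciSup (hbdd S x) i
  have key : ∀ S : Fin M → ℝ, (∀ i, S i = 1 ∨ S i = -1) →
      ConvexOn ℝ (pBall n p) (f S) ∧
      (∀ x ∈ pBall n p, ∀ y ∈ pBall n p, |f S x - f S y| ≤ pNorm p (x - y)) ∧
      sInf (f S '' pBall n p) ≤ -((M : ℝ) ^ (-(1 / p))) ∧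
      (∀ x ∈ pBall n p, f S x < sInf (f S '' pBall n p) + ε →
        ∀ i : Fin M, S i * x (Fin.castLE hMn i) < 0) := by
    intro S hS
    have hSabs : ∀ i, |S i| = 1 := fun i => by rcases hS i with h | h <;> rw [h] <;> norm_num
    -- one-sided Lipschitz estimate
    have hlip1 : ∀ x y : Fin n → ℝ, f S x ≤ f S y + pNorm p (x - y) := by
      intro x y
      rw [hf]
      apply ciSup_le
      intro i
      have e1 : S i * x (Fin.castLE hMn i) =
          S i * y (Fin.castLE hMn i) + S i * (x - y) (Fin.castLE hMn i) := by
        rw [Pi.sub_apply]; ring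
      rw [e1]
      refine add_le_add (hterm S y i) ?_
      calc S i * (x - y) (Fin.castLE hMn i) ≤ |S i * (x - y) (Fin.castLE hMn i)| := le_abs_self _
        _ = |(x - y) (Fin.castLE hMn i)| := by rw [abs_mul, hSabs, one_mul]
        _ ≤ pNorm p (x - y) := abs_coord_le hp0 _ _
    have hlip : ∀ x ∈ pBall n p, ∀ y ∈ pBall n p, |f S x - f S y| ≤ pNorm p (x - y) := by
      intro x _ y _
      rw [abs_sub_le_iff]
      constructor
      · linarith [hlip1 x y]
      · have h := hlip1 y x
        rw [pNorm_sub_comm y x] at h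
        linarith
    -- lower bound on the ball
    have hlb : ∀ x ∈ pBall n p, -1 ≤ f S x := by
      intro x hx
      have hx' : pNorm p x ≤ 1 := hx
      have h1 := hterm S x ⟨0, hM⟩
      have habs : |S ⟨0, hM⟩ * x (Fin.castLE hMn ⟨0, hM⟩)| = |x (Fin.castLE hMn ⟨0, hM⟩)| := by
        rw [abs_mul, hSabs, one_mul]
      have h2 := neg_abs_le (S ⟨0, hM⟩ * x (Fin.castLE hMn ⟨0, hM⟩))
      have h3 := abs_coord_le hp0 x (Fin.castLE hMn ⟨0, hM⟩)
      rw [habs] at h2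
      linarith
    have hbddb : BddBelow (f S '' pBall n p) := by
      refine ⟨-1, fun v hv => ?_⟩
      obtain ⟨x, hx, rfl⟩ := hv
      exact hlb x hx
    -- the witness point
    set y : Fin n → ℝ := fun j => if h : (j : ℕ) < M then -S ⟨j, h⟩ * c else 0 with hy
    have hsum : ∑ j : Fin n, |y j| ^ p = 1 := by
      have hterm' : ∀ j : Fin n, |y j| ^ p = if (j : ℕ) < M then c ^ p else 0 := by
        intro j
        by_cases h : (j : ℕ) < M
        · rw [if_pos h]
          have : y j = -S ⟨j, h⟩ * c := by rw [hy]; exact dif_pos h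
          rw [this, abs_mul, abs_neg, hSabs, one_mul, abs_of_pos hcpos]
        · rw [if_neg h]
          have : y j = 0 := by rw [hy]; exact dif_neg h
          rw [this, abs_zero, Real.zero_rpow hp0.ne']
      rw [Finset.sum_congr rfl fun j _ => hterm' j]
      rw [Fin.sum_univ_eq_sum_range (fun j => if j < M then c ^ p else 0) n]
      have e1 : ∑ j ∈ Finset.range n, (if j < M then c ^ p else 0)
          = ∑ j ∈ Finset.range M, (if j < M then c ^ p else 0) :=
        (Finset.sum_subset (Finset.range_subset_range.mpr hMn)
          (fun j _ hj => by rw [if_neg (by simpa using hj)])).symm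
      rw [e1, Finset.sum_congr rfl fun j hj => if_pos (Finset.mem_range.mp hj),
        Finset.sum_const, Finset.card_range, nsmul_eq_mul]
      have e2 : c ^ p = (M : ℝ)⁻¹ := by
        rw [hc, ← Real.rpow_mul hMpos.le]
        have : -(1 / p) * p = -1 := by field_simp
        rw [this, Real.rpow_neg_one]
      rw [e2, mul_inv_cancel₀ hMpos.ne']
    have hyball : y ∈ pBall n p := by
      show pNorm p y ≤ 1
      unfold pNorm
      rw [hsum, Real.one_rpow]
    have hfy : f S y = -c := by
      rw [hf]
      have hval : ∀ i : Fin M, S i * y (Fin.castLE hMn i) = -c := by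
        intro i
        have hlt : ((Fin.castLE hMn i : Fin n) : ℕ) < M := by simpa using i.isLt
        have hyi : y (Fin.castLE hMn i) = -S ⟨_, hlt⟩ * c := by rw [hy]; exact dif_pos hlt
        have hidx : (⟨((Fin.castLE hMn i : Fin n) : ℕ), hlt⟩ : Fin M) = i := by
          apply Fin.ext; simp
        rw [hyi, hidx]
        rcases hS i with h | h <;> rw [h] <;> ring
      simp only [hval]
      exact ciSup_const
    have hinf : sInf (f S '' pBall n p) ≤ -c :=
      csInf_le hbddb ⟨y, hyball, hfy⟩
    have hmin : ∀ x ∈ pBall n p, f S x < sInf (f S '' pBall n p) + ε →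
        ∀ i : Fin M, S i * x (Fin.castLE hMn i) < 0 := by
      intro x hx hlt i
      have h1 := hterm S x i
      linarith
    have hconv : ConvexOn ℝ (pBall n p) (f S) := by
      constructor
      · intro x hx y' hy' a b ha hb hab
        have hx1 : pNorm p x ≤ 1 := hx
        have hy1 : pNorm p y' ≤ 1 := hy'
        show pNorm p (a • x + b • y') ≤ 1
        have h1 : pNorm p (a • x + b • y') ≤ a * pNorm p x + b * pNorm p y' := by
          calc pNorm p (a • x + b • y') ≤ pNorm p (a • x) + pNorm p (b • y') :=
              pNorm_add_le hp1 _ _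
            _ = a * pNorm p x + b * pNorm p y' := by
              rw [pNorm_smul hp0, pNorm_smul hp0, abs_of_nonneg ha, abs_of_nonneg hb]
        have h2 := mul_le_mul_of_nonneg_left hx1 ha
        have h3 := mul_le_mul_of_nonneg_left hy1 hb
        linarith
      · intro x hx y' hy' a b ha hb hab
        simp only [smul_eq_mul]
        rw [hf]
        apply ciSup_le
        intro i
        have e : S i * (a • x + b • y') (Fin.castLE hMn i) =
            a * (S i * x (Fin.castLE hMn i)) + b * (S i * y' (Fin.castLE hMn i)) := by
          simp only [Pi.add_apply, Pi.smul_apply, smul_eq_mul]; ring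
        rw [e]
        exact add_le_add (mul_le_mul_of_nonneg_left (hterm S x i) ha)
          (mul_le_mul_of_nonneg_left (hterm S y' i) hb)
    exact ⟨hconv, hlip, hinf, hmin⟩
  have part3 : ∀ S T : Fin M → ℝ, (∀ i, S i = 1 ∨ S i = -1) → (∀ i, T i = 1 ∨ T i = -1) →
      ∀ x, x ∈ epsMinima (pBall n p) (f S) ε → x ∈ epsMinima (pBall n p) (f T) ε → S = T := by
    intro S T hS hT x hxS hxT
    obtain ⟨hxB, hxS'⟩ := hxS
    obtain ⟨_, hxT'⟩ := hxT
    have hS0 := (key S hS).2.2.2 x hxB hxS'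
    have hT0 := (key T hT).2.2.2 x hxB hxT'
    funext i
    have a := hS0 i
    have b := hT0 i
    rcases hS i with h1 | h1 <;> rcases hT i with h2 | h2 <;> rw [h1, h2] <;>
        rw [h1] at a <;> rw [h2] at b <;> first | rfl | linarith
  refine ⟨key, ?_, part3⟩
  intro S T hS hT hST
  rw [Set.eq_empty_iff_forall_notMem]
  rintro x ⟨hxS, hxT⟩
  exact hST (part3 S T hS hT x hxS hxT)
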